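/- Let p be a prime and let (H,h) and (H',h') be rooted graphs (graphs with a distinguished vertex), neither of which has a rooted automorphism of order p. If for every rooted graph (G,g) the number of root-preserving homomorphisms from (G,g) to (H,h) is congruent mod p to the number of root-preserving homomorphisms from (G,g) to (H',h'), then (H,h) and (H',h') are isomorphic as rooted graphs. -/

import Mathlib

structure RGraph (V : Type) where
  Adj : V → V → Prop
  symm : ∀ u v, Adj u v → Adj v u

def RGraph.IsHom {V W : Type} (G : RGraph V) (H : RGraph W) (f : V → W) : Prop :=
  ∀ u v, G.Adj u v → H.Adj (f u) (f v)

noncomputable def homCount {V W : Type} (G : RGraph V) (H : RGraph W) : ℕ :=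
  Nat.card {f : V → W // G.IsHom H f}

def RGraph.IsAut {V : Type} (H : RGraph V) (σ : Equiv.Perm V) : Prop :=
  ∀ u v, H.Adj u v ↔ H.Adj (σ u) (σ v)

def RGraph.fixedSubgraph {V : Type} (H : RGraph V) (σ : Equiv.Perm V) :
    RGraph {v : V // σ v = v} :=
  ⟨fun u v => H.Adj u v, fun u v h => H.symm u v h⟩
/-- Number of root-preserving homomorphisms between rooted graphs. -/
noncomputable def homCountR {V W : Type} (G : RGraph V) (g : V) (H : RGraph W) (h : W) : ℕ :=
  Nat.card {f : V → W // G.IsHom H f ∧ f g = h}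


/-!
Every rooted homomorphism `G → H` factors uniquely through the quotient of `G` by its kernel,
as an injective rooted homomorphism; hence `hom(G, H) = ∑ₛ inj(G/s, H)` over all equivalence
relations `s` on the vertices of `G`. The quotient by equality is `G` itself and every other
quotient is smaller, so induction on the number of vertices turns the congruence of the hom
counts into a congruence of the injective counts. Then `inj(H, H') ≡ inj(H, H) = |Aut(H, h)|`,
which is prime to `p` by Cauchy's theorem, so there are injective rooted homomorphisms
`H → H'` and `H' → H`. Their composite is an injective endomorphism of a finite graph, so it
reflects adjacency, and therefore `H → H'` is a rooted isomorphism.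
-/

instance Setoid.finite {U : Type} [Finite U] : Finite (Setoid U) :=
  Finite.of_injective (fun s : Setoid U => ⇑s) fun _ _ => Setoid.eq_iff_rel_eq.2

theorem Setoid.ker_comp_mk_of_injective {U W : Type} {s : Setoid U} {φ : Quotient s → W}
    (hφ : Function.Injective φ) : Setoid.ker (φ ∘ Quotient.mk s) = s :=
  Setoid.ext fun _ _ =>
    ⟨fun hab => Quotient.exact (hφ hab), fun hab => congrArg φ (Quotient.sound hab)⟩

theorem Setoid.card_quotient_lt_of_ne_bot {U : Type} [Finite U] {s : Setoid U} (hs : s ≠ ⊥) :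
    Nat.card (Quotient s) < Nat.card U := by
  refine (Nat.card_le_card_of_surjective _ Quotient.mk_surjective).lt_of_ne fun hcard => hs ?_
  have hbij := (Nat.bijective_iff_surjective_and_card (Quotient.mk s)).2
    ⟨Quotient.mk_surjective, hcard.symm⟩
  exact Setoid.ext fun a b =>
    ⟨fun hab => hbij.1 (Quotient.sound hab), fun hab => hab ▸ s.refl a⟩

namespace RGraph

variable {U V W : Type}

def quotient (G : RGraph U) (s : Setoid U) : RGraph (Quotient s) :=
  ⟨fun x y => ∃ u v, Quotient.mk s u = x ∧ Quotient.mk s v = y ∧ G.Adj u v,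
   by rintro x y ⟨u, v, hu, hv, huv⟩; exact ⟨v, u, hv, hu, G.symm _ _ huv⟩⟩

theorem isHom_quotient_iff (G : RGraph U) (s : Setoid U) (H : RGraph W) (φ : Quotient s → W) :
    (G.quotient s).IsHom H φ ↔ G.IsHom H (φ ∘ Quotient.mk s) := by
  refine ⟨fun hφ u v huv => hφ _ _ ⟨u, v, rfl, rfl, huv⟩, ?_⟩
  rintro hφ _ _ ⟨u, v, rfl, rfl, huv⟩
  exact hφ u v huv

theorem quotient_bot_adj_mk (G : RGraph U) (a b : U) :
    (G.quotient ⊥).Adj (Quotient.mk ⊥ a) (Quotient.mk ⊥ b) ↔ G.Adj a b := by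
  refine ⟨?_, fun hab => ⟨a, b, rfl, rfl, hab⟩⟩
  rintro ⟨u, v, hu, hv, huv⟩
  rwa [← (Quotient.exact hu : u = a), ← (Quotient.exact hv : v = b)]

theorem IsHom.comp {G : RGraph U} {H : RGraph V} {K : RGraph W} {f : U → V} {f' : V → W}
    (hf' : H.IsHom K f') (hf : G.IsHom H f) : G.IsHom K (f' ∘ f) :=
  fun u v huv => hf' _ _ (hf u v huv)

/-- An injective endomorphism of a finite graph permutes its edges, so it also reflects them. -/
theorem IsHom.adj_iff_of_injective [Finite V] {H : RGraph V} {f : V → V} (hf : H.IsHom H f)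
    (hinj : Function.Injective f) (u v : V) : H.Adj (f u) (f v) ↔ H.Adj u v := by
  refine ⟨fun huv => ?_, hf u v⟩
  let onEdges : {e : V × V // H.Adj e.1 e.2} → {e : V × V // H.Adj e.1 e.2} :=
    fun e => ⟨(f e.1.1, f e.1.2), hf _ _ e.2⟩
  have hsurj : Function.Surjective onEdges := Finite.surjective_of_injective fun e e' hee' => by
    simp only [onEdges, Subtype.mk.injEq, Prod.mk.injEq] at hee'
    exact Subtype.ext (Prod.ext (hinj hee'.1) (hinj hee'.2))
  obtain ⟨⟨⟨a, b⟩, hab⟩, he⟩ := hsurj ⟨(f u, f v), huv⟩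
  simp only [onEdges, Subtype.mk.injEq, Prod.mk.injEq] at he
  rwa [← hinj he.1, ← hinj he.2]

def rootedAut (H : RGraph V) (h : V) : Subgroup (Equiv.Perm V) where
  carrier := {σ | H.IsAut σ ∧ σ h = h}
  one_mem' := ⟨fun _ _ => Iff.rfl, rfl⟩
  mul_mem' := fun {σ τ} hσ hτ =>
    ⟨fun u v => (hτ.1 u v).trans (hσ.1 _ _), by simp [hτ.2, hσ.2]⟩
  inv_mem' := fun {σ} hσ => ⟨fun u v => by simpa using (hσ.1 (σ⁻¹ u) (σ⁻¹ v)).symm,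
    by simpa using congrArg (⇑σ⁻¹) hσ.2.symm⟩

end RGraph

open RGraph

noncomputable def injCountR {V W : Type} (G : RGraph V) (g : V) (H : RGraph W) (h : W) : ℕ :=
  Nat.card {f : V → W // G.IsHom H f ∧ f g = h ∧ Function.Injective f}

section
variable {U U' V W : Type}

noncomputable def rootedHomEquivSigmaInj (G : RGraph U) (g : U) (H : RGraph W) (h : W) :
    (Σ s : Setoid U, {φ : Quotient s → W //
      (G.quotient s).IsHom H φ ∧ φ (Quotient.mk s g) = h ∧ Function.Injective φ}) ≃
    {f : U → W // G.IsHom H f ∧ f g = h} := by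
  refine Equiv.ofBijective (fun x => ⟨x.2.1 ∘ Quotient.mk x.1,
    (isHom_quotient_iff G x.1 H x.2.1).1 x.2.2.1, x.2.2.2.1⟩) ⟨?_, ?_⟩
  · rintro ⟨s, φ, hφ⟩ ⟨s', φ', hφ'⟩ hEq
    have hcomp : φ ∘ Quotient.mk s = φ' ∘ Quotient.mk s' := congrArg Subtype.val hEq
    obtain rfl : s = s' := by
      rw [← Setoid.ker_comp_mk_of_injective hφ.2.2, ← Setoid.ker_comp_mk_of_injective hφ'.2.2,
        hcomp]
    obtain rfl : φ = φ' := Quotient.mk_surjective.injective_comp_right hcomp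
    rfl
  · rintro ⟨f, hf, hfg⟩
    refine ⟨⟨Setoid.ker f, Setoid.kerLift f, ?_, hfg, Setoid.kerLift_injective f⟩, rfl⟩
    exact (isHom_quotient_iff G _ H _).2 hf

theorem homCountR_eq_sum_injCountR [Finite U] [Finite W] (G : RGraph U) (g : U)
    (H : RGraph W) (h : W) [Fintype (Setoid U)] :
    homCountR G g H h = ∑ s : Setoid U, injCountR (G.quotient s) (Quotient.mk s g) H h := by
  rw [homCountR, ← Nat.card_congr (rootedHomEquivSigmaInj G g H h), Nat.card_sigma]
  rfl

theorem injCountR_congr (e : U ≃ U') {G : RGraph U} {G' : RGraph U'}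
    (he : ∀ a b, G'.Adj (e a) (e b) ↔ G.Adj a b) (g : U) (H : RGraph W) (h : W) :
    injCountR G' (e g) H h = injCountR G g H h := by
  refine Nat.card_congr ((e.arrowCongr (.refl W)).symm.subtypeEquiv fun φ => ?_)
  have hhom : G'.IsHom H φ ↔ G.IsHom H (φ ∘ e) := by
    refine ⟨fun hφ a b hab => hφ _ _ ((he a b).2 hab), fun hφ a b hab => ?_⟩
    simpa using hφ (e.symm a) (e.symm b) ((he _ _).1 (by simpa using hab))
  change _ ↔ G.IsHom H (φ ∘ e) ∧ φ (e g) = h ∧ Function.Injective (φ ∘ e)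
  rw [hhom, e.injective_comp]

theorem injCountR_quotient_bot (G : RGraph U) (g : U) (H : RGraph W) (h : W) :
    injCountR (G.quotient ⊥) (Quotient.mk ⊥ g) H h = injCountR G g H h :=
  injCountR_congr Setoid.quotientBotEquiv.symm (quotient_bot_adj_mk G) g H h

theorem injCountR_modEq_of_homCountR_modEq [Finite V] [Finite W] {p : ℕ} {H : RGraph V} {h : V}
    {H' : RGraph W} {h' : W}
    (hhom : ∀ (U : Type) [Fintype U] (G : RGraph U) (g : U),
      homCountR G g H h ≡ homCountR G g H' h' [MOD p])
    (U : Type) [Finite U] (G : RGraph U) (g : U) :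
    injCountR G g H h ≡ injCountR G g H' h' [MOD p] := by
  classical
  have := Fintype.ofFinite U
  have := Fintype.ofFinite (Setoid U)
  have ih : ∀ s ≠ (⊥ : Setoid U),
      (injCountR (G.quotient s) (Quotient.mk s g) H h : ZMod p) =
        injCountR (G.quotient s) (Quotient.mk s g) H' h' := fun s hs =>
    (ZMod.natCast_eq_natCast_iff _ _ _).2
      (injCountR_modEq_of_homCountR_modEq hhom (Quotient s) (G.quotient s) (Quotient.mk s g))
  have hsum := (ZMod.natCast_eq_natCast_iff _ _ _).2 (hhom U G g)
  rw [homCountR_eq_sum_injCountR, homCountR_eq_sum_injCountR] at hsum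
  push_cast at hsum
  rw [← Finset.add_sum_erase _ _ (Finset.mem_univ ⊥),
    ← Finset.add_sum_erase _ _ (Finset.mem_univ ⊥),
    Finset.sum_congr rfl fun s hs => ih s (Finset.ne_of_mem_erase hs), add_left_inj,
    injCountR_quotient_bot, injCountR_quotient_bot] at hsum
  exact (ZMod.natCast_eq_natCast_iff _ _ _).1 hsum
termination_by Nat.card U
decreasing_by exact Setoid.card_quotient_lt_of_ne_bot hs

theorem injCountR_self_eq_card_rootedAut [Finite V] (H : RGraph V) (h : V) :
    injCountR H h H h = Nat.card (H.rootedAut h) :=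
  Nat.card_congr
    { toFun := fun f => ⟨Equiv.ofBijective f.1 (Finite.injective_iff_bijective.1 f.2.2.2),
        fun u v => (f.2.1.adj_iff_of_injective f.2.2.2 u v).symm, f.2.2.1⟩
      invFun := fun σ => ⟨σ.1, fun u v => (σ.2.1 u v).1, σ.2.2, σ.1.injective⟩
      left_inv := fun _ => rfl
      right_inv := fun _ => Subtype.ext (Equiv.ext fun _ => rfl) }

theorem not_dvd_card_rootedAut [Finite V] {p : ℕ} (hp : p.Prime) {H : RGraph V} {h : V}
    (hH : ¬∃ σ : Equiv.Perm V, H.IsAut σ ∧ σ h = h ∧ orderOf σ = p) :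
    ¬p ∣ Nat.card (H.rootedAut h) := by
  have := Fact.mk hp
  intro hdvd
  obtain ⟨σ, hσ⟩ := exists_prime_orderOf_dvd_card' p hdvd
  exact hH ⟨σ, σ.2.1, σ.2.2, by rwa [Subgroup.orderOf_coe]⟩

theorem exists_injective_rooted_hom [Finite V] [Finite W] {p : ℕ} (hp : p.Prime)
    {H : RGraph V} {h : V} {H' : RGraph W} {h' : W}
    (hH : ¬∃ σ : Equiv.Perm V, H.IsAut σ ∧ σ h = h ∧ orderOf σ = p)
    (hhom : ∀ (U : Type) [Fintype U] (G : RGraph U) (g : U),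
      homCountR G g H h ≡ homCountR G g H' h' [MOD p]) :
    ∃ f : V → W, H.IsHom H' f ∧ f h = h' ∧ Function.Injective f := by
  have hcong := injCountR_modEq_of_homCountR_modEq hhom V H h
  rw [injCountR_self_eq_card_rootedAut] at hcong
  have hne : injCountR H h H' h' ≠ 0 := fun h0 =>
    not_dvd_card_rootedAut hp hH (Nat.modEq_zero_iff_dvd.1 (h0 ▸ hcong))
  obtain ⟨⟨f, hf⟩⟩ := (Nat.card_ne_zero.1 hne).1
  exact ⟨f, hf⟩

theorem exists_rooted_iso_of_injective_homs [Finite V] [Finite W] {H : RGraph V} {h : V}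
    {H' : RGraph W} {h' : W} {f : V → W} {f' : W → V} (hf : H.IsHom H' f) (hfh : f h = h')
    (hfinj : Function.Injective f) (hf' : H'.IsHom H f') (hf'inj : Function.Injective f') :
    ∃ e : V ≃ W, (∀ u v, H.Adj u v ↔ H'.Adj (e u) (e v)) ∧ e h = h' := by
  have hcard : Nat.card V = Nat.card W :=
    (Nat.card_le_card_of_injective f hfinj).antisymm (Nat.card_le_card_of_injective f' hf'inj)
  have hbij := (Nat.bijective_iff_injective_and_card f).2 ⟨hfinj, hcard⟩
  have hreflect := (hf'.comp hf).adj_iff_of_injective (hf'inj.comp hfinj)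
  exact ⟨Equiv.ofBijective f hbij,
    fun u v => ⟨hf u v, fun huv => (hreflect u v).1 (hf' _ _ huv)⟩, hfh⟩

end

/-- Rooted graphs with no rooted automorphism of order p and the same rooted
mod-p Lovász vector are isomorphic as rooted graphs. -/
theorem stmt7 (p : ℕ) (hp : p.Prime) {V W : Type} [Fintype V] [Fintype W]
    (H : RGraph V) (h : V) (H' : RGraph W) (h' : W)
    (hH : ¬∃ σ : Equiv.Perm V, H.IsAut σ ∧ σ h = h ∧ orderOf σ = p)
    (hH' : ¬∃ σ : Equiv.Perm W, H'.IsAut σ ∧ σ h' = h' ∧ orderOf σ = p)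
    (hhom : ∀ (U : Type) [Fintype U] (G : RGraph U) (g : U),
      homCountR G g H h ≡ homCountR G g H' h' [MOD p]) :
    ∃ e : V ≃ W, (∀ u v, H.Adj u v ↔ H'.Adj (e u) (e v)) ∧ e h = h' := by
  obtain ⟨f, hf, hfh, hfinj⟩ := exists_injective_rooted_hom hp hH hhom
  obtain ⟨f', hf', -, hf'inj⟩ :=
    exists_injective_rooted_hom hp hH' fun U _ G g => (hhom U G g).symm
  exact exists_rooted_iso_of_injective_homs hf hfh hfinj hf' hf'inj
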